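/- Let ξ be a real irrational number and τ > 0. Assume there exist integer sequences (u_n) and (v_n) with u_n ≠ 0 for all n, such that u_n ξ − v_n → 0, |u_{n+1} ξ − v_{n+1}| = |u_n ξ − v_n|^{1 + o(1)}, and |u_n ξ − v_n| ≤ |u_n|^{−τ + o(1)}. Then μ(ξ) ≤ 1 + 1/τ. -/

import Mathlib

open Filter Topology

/-- The irrationality exponent of a real number, as an extended real:
the infimum of all real `μ` such that `|ξ - p/q| > 1/q^μ` for all integers `p, q`
with `q` sufficiently large (`⊤` if no such real `μ` exists). -/
noncomputable def irrationalityExponent (ξ : ℝ) : EReal :=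
  sInf {x : EReal | ∃ μ : ℝ, x = (μ : EReal) ∧
    ∀ᶠ q : ℕ in atTop, ∀ p : ℤ, |ξ - (p : ℝ) / (q : ℝ)| > 1 / (q : ℝ) ^ μ}

/-!
Put `ε n = |u n * ξ - v n|`, which is positive since `ξ` is irrational and tends to `0`. Given a
large `q`, pick `n` with `ε n < 1 / (2q) ≤ ε (n - 1)`. The integer `q v n - u n p` then forces
`|ξ - p / q| ≥ ε n / |u n|` for every `p`. As `ε n = ε (n - 1) ^ (1 + o(1))` and
`|u n| ≤ ε n ^ (-1/τ + o(1))`, this bound is `(2q) ^ (-(1 + 1/τ) - o(1))`.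
-/

theorem exists_le_and_succ_lt {α : Type*} [LinearOrder α] {f : ℕ → α} {x : α} {N : ℕ}
    (hf : ∀ᶠ n in atTop, f n < x) (hN : x ≤ f N) : ∃ m ≥ N, x ≤ f m ∧ f (m + 1) < x := by
  by_contra! h
  have hge : ∀ m ≥ N, x ≤ f m := fun m hm => Nat.le_induction hN (fun k hk ih => h k hk ih) m hm
  obtain ⟨n, hn, hNn⟩ := (hf.and (eventually_ge_atTop N)).exists
  exact (hge n hNn).not_gt hn

theorem abs_mul_sub_div_abs_le_abs_sub_div {ξ : ℝ} {u v p q : ℤ} (hu : u ≠ 0) (hq : q ≠ 0)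
    (h : 2 * |(q : ℝ)| * |u * ξ - v| ≤ 1) : |u * ξ - v| / |(u : ℝ)| ≤ |ξ - p / q| := by
  have hq' : (q : ℝ) ≠ 0 := Int.cast_ne_zero.mpr hq
  have hu' : (0 : ℝ) < |(u : ℝ)| := abs_pos.mpr (Int.cast_ne_zero.mpr hu)
  -- Either `q v = u p`, or the nonzero integer `q v - u p` outweighs `q (u ξ - v)`.
  have hid : (u : ℝ) * q * (ξ - p / q) = q * (u * ξ - v) + ((q * v - u * p : ℤ) : ℝ) := by
    push_cast
    field_simp
    ring
  have key : |(q : ℝ) * (u * ξ - v)| ≤ |(u : ℝ) * q * (ξ - p / q)| := by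
    rw [hid]
    rcases eq_or_ne (q * v - u * p) 0 with h0 | h0
    · simp [h0]
    · have hk : (1 : ℝ) ≤ |((q * v - u * p : ℤ) : ℝ)| := by exact_mod_cast Int.one_le_abs h0
      have htri := abs_sub_abs_le_abs_sub ((q * v - u * p : ℤ) : ℝ) (-(q * (u * ξ - v)))
      rw [abs_neg, abs_mul] at htri
      rw [add_comm, ← sub_neg_eq_add, abs_mul]
      linarith
  rw [abs_mul, abs_mul, abs_mul] at key
  rw [div_le_iff₀ hu']
  exact le_of_mul_le_mul_left (by linarith) (abs_pos.mpr hq')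

theorem rpow_one_add_inv_le_div {x e t : ℝ} (hx : 0 < x) (he : 0 < e) (ht : 0 < t)
    (h : e ≤ x ^ (-t)) : e ^ (1 + 1 / t) ≤ e / x := by
  rw [one_div]
  have hx' : x ≤ e ^ (-t)⁻¹ := (Real.le_rpow_inv_iff_of_neg hx he (neg_neg_of_pos ht)).2 h
  calc e ^ (1 + t⁻¹) = e / e ^ (-t)⁻¹ := by
        rw [Real.rpow_add he, Real.rpow_one, inv_neg, Real.rpow_neg he.le, div_inv_eq_mul]
    _ ≤ e / x := div_le_div_of_nonneg_left he.le hx hx'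

theorem exists_pos_lt_of_one_add_one_div_lt {τ μ : ℝ} (hτ : 0 < τ) (hμ : 1 + 1 / τ < μ) :
    ∃ η, 0 < η ∧ η < τ ∧ (1 + η) * (1 + 1 / (τ - η)) < μ := by
  have hcont : ContinuousAt (fun η : ℝ => (1 + η) * (1 + 1 / (τ - η))) 0 := by
    fun_prop (disch := simpa using hτ.ne')
  have hlt : ∀ᶠ η in 𝓝 (0 : ℝ), (1 + η) * (1 + 1 / (τ - η)) < μ :=
    hcont.eventually_lt continuousAt_const (by simpa using hμ)
  obtain ⟨η, ⟨hτη, hμη⟩, hη⟩ := (((eventually_lt_nhds hτ).and hlt).filter_mono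
    nhdsWithin_le_nhds |>.and (self_mem_nhdsWithin : Set.Ioi (0 : ℝ) ∈ 𝓝[>] 0)).exists
  exact ⟨η, hη, hτη, hμη⟩

theorem eventually_one_div_rpow_lt_inv_two_mul_rpow {s μ : ℝ} (hs : s < μ) :
    ∀ᶠ q : ℕ in atTop, 1 / (q : ℝ) ^ μ < (2 * (q : ℝ))⁻¹ ^ s := by
  have hgrow : Tendsto (fun q : ℕ => (q : ℝ) ^ (μ - s)) atTop atTop :=
    (tendsto_rpow_atTop (sub_pos.mpr hs)).comp tendsto_natCast_atTop_atTop
  filter_upwards [hgrow.eventually_gt_atTop ((2 : ℝ) ^ s), eventually_gt_atTop 0] with q hq hq0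
  have hq0' : (0 : ℝ) < q := Nat.cast_pos.mpr hq0
  rw [Real.inv_rpow (by positivity), Real.mul_rpow zero_le_two hq0'.le, ← one_div]
  apply one_div_lt_one_div_of_lt (by positivity)
  calc (2 : ℝ) ^ s * (q : ℝ) ^ s < (q : ℝ) ^ (μ - s) * (q : ℝ) ^ s := by gcongr
    _ = (q : ℝ) ^ μ := by rw [← Real.rpow_add hq0', sub_add_cancel]

theorem inv_two_mul_rpow_le_abs_sub_div {ξ a η t : ℝ} {u v p : ℤ} {q : ℕ} (hu : u ≠ 0)
    (hq : 0 < q) (hη : 0 ≤ 1 + η) (ht : 0 < t) (ha : (2 * (q : ℝ))⁻¹ ≤ a)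
    (hstep : a ^ (1 + η) ≤ |u * ξ - v|) (hlt : |u * ξ - v| < (2 * (q : ℝ))⁻¹)
    (hsmall : |u * ξ - v| ≤ |(u : ℝ)| ^ (-t)) :
    (2 * (q : ℝ))⁻¹ ^ ((1 + η) * (1 + 1 / t)) ≤ |ξ - p / q| := by
  have hy : 0 < (2 * (q : ℝ))⁻¹ := by positivity
  have he : 0 < |u * ξ - v| := (Real.rpow_pos_of_pos (hy.trans_le ha) _).trans_le hstep
  have hlegendre := abs_mul_sub_div_abs_le_abs_sub_div (ξ := ξ) (v := v) (p := p) hu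
    (Nat.cast_ne_zero.mpr hq.ne') (q := (q : ℤ))
  rw [Int.cast_natCast, Nat.abs_cast] at hlegendre
  calc (2 * (q : ℝ))⁻¹ ^ ((1 + η) * (1 + 1 / t))
      = ((2 * (q : ℝ))⁻¹ ^ (1 + η)) ^ (1 + 1 / t) := Real.rpow_mul hy.le _ _
    _ ≤ |u * ξ - v| ^ (1 + 1 / t) := by
      gcongr
      exact (Real.rpow_le_rpow hy.le ha hη).trans hstep
    _ ≤ |u * ξ - v| / |(u : ℝ)| :=
      rpow_one_add_inv_le_div (abs_pos.mpr (Int.cast_ne_zero.mpr hu)) he ht hsmall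
    _ ≤ |ξ - p / q| := by
      refine hlegendre ?_
      have h2q : 0 < 2 * (q : ℝ) := by positivity
      calc 2 * (q : ℝ) * |u * ξ - v| ≤ 2 * q * (2 * (q : ℝ))⁻¹ := by gcongr
        _ = 1 := mul_inv_cancel₀ h2q.ne'

theorem eventually_one_div_rpow_lt_abs_sub_div {ξ τ μ : ℝ} (hξ : Irrational ξ) (hτ : 0 < τ)
    {u v : ℕ → ℤ} (hne : ∀ n, u n ≠ 0)
    (hlim : Tendsto (fun n => (u n : ℝ) * ξ - (v n : ℝ)) atTop (𝓝 0))
    (hratio : ∃ δ : ℕ → ℝ, Tendsto δ atTop (𝓝 0) ∧ ∀ n,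
      |(u (n + 1) : ℝ) * ξ - (v (n + 1) : ℝ)| = |(u n : ℝ) * ξ - (v n : ℝ)| ^ (1 + δ n))
    (hsmall : ∃ δ : ℕ → ℝ, Tendsto δ atTop (𝓝 0) ∧ ∀ n,
      |(u n : ℝ) * ξ - (v n : ℝ)| ≤ |(u n : ℝ)| ^ (-τ + δ n))
    (hμ : 1 + 1 / τ < μ) :
    ∀ᶠ q : ℕ in atTop, ∀ p : ℤ, 1 / (q : ℝ) ^ μ < |ξ - p / q| := by
  obtain ⟨η, hη0, hητ, hs⟩ := exists_pos_lt_of_one_add_one_div_lt hτ hμ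
  obtain ⟨δ, hδ, hδeq⟩ := hratio
  obtain ⟨δ', hδ', hδ'le⟩ := hsmall
  set ε : ℕ → ℝ := fun n => |(u n : ℝ) * ξ - v n| with hε
  have hε0 : Tendsto ε atTop (𝓝 0) := by simpa using hlim.abs
  have hstep : ∀ᶠ n in atTop, ε n ^ (1 + η) ≤ ε (n + 1) := by
    filter_upwards [hε0.eventually_lt_const one_pos, hδ.eventually_lt_const hη0,
      hδ.eventually_const_lt neg_one_lt_zero] with n hε1 hδη hδ1
    simp only [hε, hδeq n]
    exact Real.rpow_le_rpow_of_exponent_ge' (abs_nonneg _) hε1.le (by linarith) (by linarith)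
  have hsmall' : ∀ᶠ n in atTop, ε n ≤ |(u n : ℝ)| ^ (-(τ - η)) := by
    filter_upwards [hδ'.eventually_lt_const hη0] with n hn
    refine (hδ'le n).trans (Real.rpow_le_rpow_of_exponent_le ?_ (by linarith))
    exact_mod_cast Int.one_le_abs (hne n)
  obtain ⟨N, hN⟩ := eventually_atTop.mp (hstep.and hsmall')
  have hεN : 0 < ε N := abs_pos.mpr ((hξ.intCast_mul (hne N)).sub_intCast (v N)).ne_zero
  have hinv : Tendsto (fun q : ℕ => (2 * (q : ℝ))⁻¹) atTop (𝓝 0) :=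
    tendsto_inv_atTop_zero.comp (tendsto_natCast_atTop_atTop.const_mul_atTop two_pos)
  filter_upwards [eventually_one_div_rpow_lt_inv_two_mul_rpow hs,
    hinv.eventually_lt_const hεN, eventually_gt_atTop 0] with q hlt hqN hq p
  obtain ⟨m, hm, hym, hm1⟩ := exists_le_and_succ_lt
    (hε0.eventually_lt_const (by positivity : (0 : ℝ) < (2 * (q : ℝ))⁻¹)) hqN.le
  exact hlt.trans_le (inv_two_mul_rpow_le_abs_sub_div (hne _) hq (by linarith) (by linarith)
    hym (hN m hm).1 hm1 (hN (m + 1) (by omega)).2)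

theorem irrationalityExponent_le_of_forall_lt {ξ a : ℝ}
    (h : ∀ μ : ℝ, a < μ → ∀ᶠ q : ℕ in atTop, ∀ p : ℤ, 1 / (q : ℝ) ^ μ < |ξ - p / q|) :
    irrationalityExponent ξ ≤ a :=
  EReal.le_of_forall_lt_iff_le.1 fun μ hμ => sInf_le ⟨μ, rfl, h μ (EReal.coe_lt_coe_iff.1 hμ)⟩

theorem irrationality_exponent_le_one_add_inv (ξ : ℝ) (hξ : Irrational ξ) (τ : ℝ) (hτ : 0 < τ)
    (u v : ℕ → ℤ) (hne : ∀ n, u n ≠ 0)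
    (hlim : Tendsto (fun n => (u n : ℝ) * ξ - (v n : ℝ)) atTop (𝓝 0))
    (hratio : ∃ δ : ℕ → ℝ, Tendsto δ atTop (𝓝 0) ∧ ∀ n,
      |(u (n + 1) : ℝ) * ξ - (v (n + 1) : ℝ)| = |(u n : ℝ) * ξ - (v n : ℝ)| ^ (1 + δ n))
    (hsmall : ∃ δ : ℕ → ℝ, Tendsto δ atTop (𝓝 0) ∧ ∀ n,
      |(u n : ℝ) * ξ - (v n : ℝ)| ≤ |(u n : ℝ)| ^ (-τ + δ n)) :
    irrationalityExponent ξ ≤ ((1 + 1 / τ : ℝ) : EReal) := by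
  exact irrationalityExponent_le_of_forall_lt fun _ hμ =>
    eventually_one_div_rpow_lt_abs_sub_div hξ hτ hne hlim hratio hsmall hμ
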